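/- Let ξ be a purely imaginary unit octonion orthogonal to i, and let Q_ξ(x) = r_ξ x conj(r_ξ) with r_ξ = (1+i)(1+ξ)/2. Then for every octonion v orthogonal to 1 and to i (i.e. v in the span of j,k,e,f,g,h), Q_ξ(v) = ½((−1 + i + ξ + iξ)v + ⟨v, ξ + iξ⟩(1 + i + ξ + iξ)). -/

import Mathlib

/-- The octonions, as the Cayley–Dickson double of the quaternions:
pairs `(a, b)` of quaternions with `(a,b)(u,v) = (au - v̄ b, b ū + v a)`. -/
@[ext] structure Oct where
  x : Quaternion ℝ
  y : Quaternion ℝ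

namespace Oct

noncomputable instance : Zero Oct := ⟨⟨0, 0⟩⟩
noncomputable instance : One Oct := ⟨⟨1, 0⟩⟩
noncomputable instance : Add Oct := ⟨fun p q => ⟨p.x + q.x, p.y + q.y⟩⟩
noncomputable instance : Neg Oct := ⟨fun p => ⟨-p.x, -p.y⟩⟩
noncomputable instance : Sub Oct := ⟨fun p q => p + -q⟩
noncomputable instance : Mul Oct := ⟨fun p q => ⟨p.x * q.x - star q.y * p.y, p.y * star q.x + q.y * p.x⟩⟩
noncomputable instance : SMul ℝ Oct := ⟨fun t p => ⟨t • p.x, t • p.y⟩⟩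

/-- Octonion conjugation: `(a, b)̄ = (ā, -b)`. -/
noncomputable def conj (p : Oct) : Oct := ⟨star p.x, -p.y⟩

/-- The real part of an octonion. -/
noncomputable def re (p : Oct) : ℝ := p.x.re

/-- The Euclidean inner product on the octonions: `⟨p, q⟩ = Re (p q̄)`. -/
noncomputable def inner (p q : Oct) : ℝ := (p * conj q).re

/-- The squared norm of an octonion. -/
noncomputable def normSq (p : Oct) : ℝ := inner p p

/-- The basic imaginary unit `i` of the octonions. -/
noncomputable def i : Oct := ⟨⟨0, 1, 0, 0⟩, 0⟩

/-- The inverse of an octonion: `r⁻¹ = r̄ / |r|²`. -/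
noncomputable def inv (p : Oct) : Oct := (normSq p)⁻¹ • conj p

end Oct

/-! Compare the two sides in the eight real coordinates of the Cayley–Dickson pair. The hypotheses
kill the `1`- and `i`-coordinates of `ξ` and `v`; afterwards each coordinate of the difference of
the two sides is the matching coordinate of `-v / 2` times `|ξ|² - 1`. -/

namespace Oct

@[simp] theorem x_add (p q : Oct) : (p + q).x = p.x + q.x := rfl
@[simp] theorem y_add (p q : Oct) : (p + q).y = p.y + q.y := rfl
@[simp] theorem x_neg (p : Oct) : (-p).x = -p.x := rfl
@[simp] theorem y_neg (p : Oct) : (-p).y = -p.y := rfl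
@[simp] theorem x_mul (p q : Oct) : (p * q).x = p.x * q.x - star q.y * p.y := rfl
@[simp] theorem y_mul (p q : Oct) : (p * q).y = p.y * star q.x + q.y * p.x := rfl
@[simp] theorem x_smul (t : ℝ) (p : Oct) : (t • p).x = t • p.x := rfl
@[simp] theorem y_smul (t : ℝ) (p : Oct) : (t • p).y = t • p.y := rfl
@[simp] theorem x_one : (1 : Oct).x = 1 := rfl
@[simp] theorem y_one : (1 : Oct).y = 0 := rfl
@[simp] theorem x_conj (p : Oct) : (conj p).x = star p.x := rfl
@[simp] theorem y_conj (p : Oct) : (conj p).y = -p.y := rfl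
@[simp] theorem re_x_i : i.x.re = 0 := rfl
@[simp] theorem imI_x_i : i.x.imI = 1 := rfl
@[simp] theorem imJ_x_i : i.x.imJ = 0 := rfl
@[simp] theorem imK_x_i : i.x.imK = 0 := rfl
@[simp] theorem y_i : i.y = 0 := rfl

theorem inner_eq (p q : Oct) :
    inner p q = p.x.re * q.x.re + p.x.imI * q.x.imI + p.x.imJ * q.x.imJ + p.x.imK * q.x.imK +
      p.y.re * q.y.re + p.y.imI * q.y.imI + p.y.imJ * q.y.imJ + p.y.imK * q.y.imK := by
  simp only [inner, re, x_mul, x_conj, y_conj, star_neg, neg_mul, mul_neg, sub_neg_eq_add,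
    Quaternion.re_add, Quaternion.re_mul, Quaternion.re_star, Quaternion.imI_star,
    Quaternion.imJ_star, Quaternion.imK_star]
  ring

theorem normSq_eq (p : Oct) :
    normSq p = p.x.re ^ 2 + p.x.imI ^ 2 + p.x.imJ ^ 2 + p.x.imK ^ 2 +
      p.y.re ^ 2 + p.y.imI ^ 2 + p.y.imJ ^ 2 + p.y.imK ^ 2 := by
  rw [normSq, inner_eq]
  ring

theorem inner_one (p : Oct) : inner p 1 = p.x.re := by
  simp [inner_eq, Quaternion.re_one, Quaternion.imI_one, Quaternion.imJ_one, Quaternion.imK_one,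
    Quaternion.re_zero, Quaternion.imI_zero, Quaternion.imJ_zero, Quaternion.imK_zero]

theorem inner_i (p : Oct) : inner p i = p.x.imI := by
  simp [inner_eq, Quaternion.re_zero, Quaternion.imI_zero, Quaternion.imJ_zero,
    Quaternion.imK_zero]

end Oct

/-- Lemma 3.6: for `ξ` a purely imaginary unit octonion orthogonal to `i`, and `v`
orthogonal to `1` and `i`,
`Q_ξ(v) = ½((-1 + i + ξ + iξ) v + ⟨v, ξ + iξ⟩ (1 + i + ξ + iξ))`. -/
theorem oct_Q_xi_formula (ξ v : Oct) (him : Oct.re ξ = 0)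
    (hunit : Oct.normSq ξ = 1) (horth : Oct.inner ξ Oct.i = 0)
    (hv1 : Oct.inner v 1 = 0) (hvi : Oct.inner v Oct.i = 0) :
    ((1 / 2 : ℝ) • ((1 + Oct.i) * (1 + ξ)) * v) *
        Oct.conj ((1 / 2 : ℝ) • ((1 + Oct.i) * (1 + ξ))) =
      (1 / 2 : ℝ) •
        ((-1 + Oct.i + ξ + Oct.i * ξ) * v +
          Oct.inner v (ξ + Oct.i * ξ) • (1 + Oct.i + ξ + Oct.i * ξ)) := by
  rw [Oct.re] at him
  rw [Oct.inner_i] at horth hvi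
  rw [Oct.inner_one] at hv1
  rw [Oct.normSq_eq, him, horth] at hunit
  ext <;> simp only [Oct.x_add, Oct.y_add, Oct.x_neg, Oct.y_neg, Oct.x_mul, Oct.y_mul, Oct.x_smul,
    Oct.y_smul, Oct.x_one, Oct.y_one, Oct.x_conj, Oct.y_conj, Oct.re_x_i, Oct.imI_x_i, Oct.imJ_x_i,
    Oct.imK_x_i, Oct.y_i, Oct.inner_eq, smul_eq_mul,
    Quaternion.re_add, Quaternion.imI_add, Quaternion.imJ_add, Quaternion.imK_add,
    Quaternion.re_neg, Quaternion.imI_neg, Quaternion.imJ_neg, Quaternion.imK_neg,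
    Quaternion.re_sub, Quaternion.imI_sub, Quaternion.imJ_sub, Quaternion.imK_sub,
    Quaternion.re_mul, Quaternion.imI_mul, Quaternion.imJ_mul, Quaternion.imK_mul,
    Quaternion.re_smul, Quaternion.imI_smul, Quaternion.imJ_smul, Quaternion.imK_smul,
    Quaternion.re_star, Quaternion.imI_star, Quaternion.imJ_star, Quaternion.imK_star,
    Quaternion.re_one, Quaternion.imI_one, Quaternion.imJ_one, Quaternion.imK_one,
    Quaternion.re_zero, Quaternion.imI_zero, Quaternion.imJ_zero, Quaternion.imK_zero,
    him, horth, hv1, hvi]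
  · ring
  · ring
  · linear_combination (-v.x.imJ / 2) * hunit
  · linear_combination (-v.x.imK / 2) * hunit
  · linear_combination (-v.y.re / 2) * hunit
  · linear_combination (-v.y.imI / 2) * hunit
  · linear_combination (-v.y.imJ / 2) * hunit
  · linear_combination (-v.y.imK / 2) * hunit
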